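/- arXiv:1901.01066 — 5 statements merged into one kernel-verified Lean document; each statement's English description precedes it below -/
import Mathlib

section
/- For every integer n ≥ 14 there exists a prime p satisfying (2/3)n ≤ p < n - 2. -/
open Real

namespace TwoThirds




/-- `log z ≤ 8 * z^(1/8)` for positive `z`. -/
lemma log_le_eight_rpow {z : ℝ} (hz : 0 < z) : Real.log z ≤ 8 * z ^ (8⁻¹ : ℝ) := by
  have h1 : Real.log z = 8 * Real.log (z ^ (8⁻¹ : ℝ)) := by
    rw [Real.log_rpow hz]; ring
  have h2 : Real.log (z ^ (8⁻¹ : ℝ)) ≤ z ^ (8⁻¹ : ℝ) - 1 :=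
    Real.log_le_sub_one_of_pos (Real.rpow_pos_of_pos hz _)
  nlinarith [Real.rpow_pos_of_pos hz (8⁻¹ : ℝ)]

/-- if `a^8 ≤ b^3` then `a ≤ b^(3/8)` (for nonneg reals). -/
lemma le_rpow_three_eighth {a b : ℝ} (ha : 0 ≤ a) (hb : 0 ≤ b)
    (h : a ^ (8:ℕ) ≤ b ^ (3:ℕ)) : a ≤ b ^ (3/8 : ℝ) := by
  have hc : 0 ≤ b ^ (3/8 : ℝ) := Real.rpow_nonneg hb _
  refine le_of_pow_le_pow_left₀ (n := 8) (by norm_num) hc ?_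
  calc a ^ (8:ℕ) ≤ b ^ (3:ℕ) := h
    _ = (b ^ (3/8 : ℝ)) ^ (8:ℕ) := by
        rw [← Real.rpow_natCast (b ^ (3/8 : ℝ)) 8, ← Real.rpow_mul hb,
          ← Real.rpow_natCast b 3]
        norm_num

/-- if `a^8 ≤ b^7` then `a ≤ b^(7/8)` (for nonneg reals). -/
lemma le_rpow_seven_eighth {a b : ℝ} (ha : 0 ≤ a) (hb : 0 ≤ b)
    (h : a ^ (8:ℕ) ≤ b ^ (7:ℕ)) : a ≤ b ^ (7/8 : ℝ) := by
  have hc : 0 ≤ b ^ (7/8 : ℝ) := Real.rpow_nonneg hb _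
  refine le_of_pow_le_pow_left₀ (n := 8) (by norm_num) hc ?_
  calc a ^ (8:ℕ) ≤ b ^ (7:ℕ) := h
    _ = (b ^ (7/8 : ℝ)) ^ (8:ℕ) := by
        rw [← Real.rpow_natCast (b ^ (7/8 : ℝ)) 8, ← Real.rpow_mul hb,
          ← Real.rpow_natCast b 7]
        norm_num

lemma log_three_lb : (1.0931471803 : ℝ) ≤ Real.log 3 := by
  have h15 : (0.4 : ℝ) ≤ Real.log 1.5 := by
    rw [Real.le_log_iff_exp_le (by norm_num)]
    have h := Real.exp_one_lt_d9
    have h2 : Real.exp 0.4 ^ (5:ℕ) = Real.exp 2 := by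
      rw [← Real.exp_nat_mul]; norm_num
    have h3 : Real.exp 2 = Real.exp 1 ^ (2:ℕ) := by
      rw [← Real.exp_nat_mul]; norm_num
    have h4 : Real.exp 2 < 7.59375 := by
      rw [h3]; nlinarith [Real.exp_pos (1:ℝ)]
    have h5 : Real.exp 0.4 ^ (5:ℕ) < (1.5:ℝ) ^ (5:ℕ) := by
      rw [h2]; norm_num; linarith
    exact le_of_lt (lt_of_pow_lt_pow_left₀ 5 (by norm_num) h5)
  have h3 : Real.log 3 = Real.log 2 + Real.log 1.5 := by
    rw [← Real.log_mul (by norm_num) (by norm_num)]; norm_num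
  have := Real.log_two_gt_d9
  linarith

/-- The main analytic inequality, for `x ≥ 700000`. -/
lemma real_main {x : ℝ} (hx : 700000 ≤ x) :
    (3*x+1) * (3*x) ^ (Real.sqrt (3*x) + 6) * 4 ^ (3*x/5) * 3 ^ (3*x/2) * 2 ^ (2*x)
      < 3 ^ (3*x) * 2 ^ x := by
  have hx0 : (0:ℝ) < x := by linarith
  have h3x : (0:ℝ) < 3*x := by linarith
  have h4x : (0:ℝ) < 4*x := by linarith
  have h3x1 : (0:ℝ) < 3*x+1 := by linarith
  -- numeric rpow lower bounds
  have hA : (234:ℝ) ≤ (3*x) ^ (3/8 : ℝ) := by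
    apply le_rpow_three_eighth (by norm_num) (le_of_lt h3x)
    calc (234:ℝ)^(8:ℕ) ≤ (2100000:ℝ)^(3:ℕ) := by norm_num
      _ ≤ (3*x)^(3:ℕ) := by gcongr; linarith
  have hB : (300000:ℝ) ≤ (3*x) ^ (7/8 : ℝ) := by
    apply le_rpow_seven_eighth (by norm_num) (le_of_lt h3x)
    calc (300000:ℝ)^(8:ℕ) ≤ (2100000:ℝ)^(7:ℕ) := by norm_num
      _ ≤ (3*x)^(7:ℕ) := by gcongr; linarith
  have hC : (300000:ℝ) ≤ (4*x) ^ (7/8 : ℝ) := by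
    apply le_rpow_seven_eighth (by norm_num) (le_of_lt h4x)
    calc (300000:ℝ)^(8:ℕ) ≤ (2800000:ℝ)^(7:ℕ) := by norm_num
      _ ≤ (4*x)^(7:ℕ) := by gcongr; linarith
  -- turn them into linear bounds on rpow terms
  have e1 : (3*x) ^ (5/8 : ℝ) * 234 ≤ 3*x := by
    calc (3*x) ^ (5/8 : ℝ) * 234 ≤ (3*x) ^ (5/8 : ℝ) * (3*x) ^ (3/8 : ℝ) := by
          gcongr
      _ = 3*x := by rw [← Real.rpow_add h3x]; norm_num
  have e2 : (3*x) ^ (8⁻¹ : ℝ) * 300000 ≤ 3*x := by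
    calc (3*x) ^ (8⁻¹ : ℝ) * 300000 ≤ (3*x) ^ (8⁻¹ : ℝ) * (3*x) ^ (7/8 : ℝ) := by
          gcongr
      _ = 3*x := by rw [← Real.rpow_add h3x]; norm_num
  have e3 : (4*x) ^ (8⁻¹ : ℝ) * 300000 ≤ 4*x := by
    calc (4*x) ^ (8⁻¹ : ℝ) * 300000 ≤ (4*x) ^ (8⁻¹ : ℝ) * (4*x) ^ (7/8 : ℝ) := by
          gcongr
      _ = 4*x := by rw [← Real.rpow_add h4x]; norm_num
  have p18 : (0:ℝ) < (3*x) ^ (8⁻¹ : ℝ) := Real.rpow_pos_of_pos h3x _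
  have p48 : (0:ℝ) < (4*x) ^ (8⁻¹ : ℝ) := Real.rpow_pos_of_pos h4x _
  -- log bounds
  have l1 : Real.log (3*x) ≤ 8 * (3*x) ^ (8⁻¹ : ℝ) := log_le_eight_rpow h3x
  have l2 : Real.log (3*x+1) ≤ 8 * (4*x) ^ (8⁻¹ : ℝ) := by
    refine le_trans (log_le_eight_rpow h3x1) ?_
    gcongr
    linarith
  have lsq : Real.sqrt (3*x) * Real.log (3*x) ≤ 8 * (3*x) ^ (5/8 : ℝ) := by
    rw [Real.sqrt_eq_rpow]
    calc (3*x) ^ (1/2 : ℝ) * Real.log (3*x) ≤ (3*x) ^ (1/2 : ℝ) * (8 * (3*x) ^ (8⁻¹ : ℝ)) := by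
          gcongr
      _ = 8 * ((3*x) ^ (1/2 : ℝ) * (3*x) ^ (8⁻¹ : ℝ)) := by ring
      _ = 8 * (3*x) ^ (5/8 : ℝ) := by rw [← Real.rpow_add h3x]; norm_num
  have lognonneg : (0:ℝ) ≤ Real.log (3*x) :=
    Real.log_nonneg (by linarith)
  -- the key linear inequality among logs
  have key : Real.log (3*x+1) + (Real.sqrt (3*x) + 6) * Real.log (3*x) + (3*x/5) * Real.log 4
      + (3*x/2) * Real.log 3 + (2*x) * Real.log 2 < (3*x) * Real.log 3 + x * Real.log 2 := by
    have l4 : Real.log 4 = 2 * Real.log 2 := by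
      rw [show (4:ℝ) = 2^(2:ℕ) by norm_num, Real.log_pow]; push_cast; ring
    have hlog2u := Real.log_two_lt_d9
    have hlog2l := Real.log_two_gt_d9
    have hlog3l := log_three_lb
    -- bound the sqrt-log terms linearly
    have b1 : (Real.sqrt (3*x) + 6) * Real.log (3*x) ≤ 8 * (3*x) ^ (5/8:ℝ) + 48 * (3*x) ^ (8⁻¹:ℝ) := by
      have := Real.sqrt_nonneg (3*x)
      nlinarith [lsq, l1]
    nlinarith [e1, e2, e3, l2, b1]
  -- assemble via exp/log
  have hApos : (0:ℝ) < (3*x+1) * (3*x) ^ (Real.sqrt (3*x) + 6) * 4 ^ (3*x/5) * 3 ^ (3*x/2) * 2 ^ (2*x) := by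
    positivity
  have hBpos : (0:ℝ) < 3 ^ (3*x) * 2 ^ x := by positivity
  rw [← Real.exp_log hApos, ← Real.exp_log hBpos]
  apply Real.exp_lt_exp.mpr
  rw [Real.log_mul (by positivity) (by positivity), Real.log_mul (by positivity) (by positivity),
    Real.log_mul (by positivity) (by positivity), Real.log_mul (by positivity) (by positivity),
    Real.log_mul (by positivity) (by positivity),
    Real.log_rpow h3x, Real.log_rpow (by norm_num), Real.log_rpow (by norm_num),
    Real.log_rpow (by norm_num), Real.log_rpow (by norm_num), Real.log_rpow (by norm_num)]
  linarith [key]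


set_option maxHeartbeats 1000000 in
/-- Nat version of the main inequality. -/
lemma main_inequality_nat {m : ℕ} (hm : 700000 ≤ m) :
    (3*m+1) * ((3*m)^(Nat.sqrt (3*m)+6) * 4^(3*m/5) * 3^(3*m/2)) * 2^(2*m)
      < 3^(3*m) * 2^m := by
  have hx : (700000:ℝ) ≤ (m:ℝ) := by exact_mod_cast hm
  have hx0 : (0:ℝ) < (m:ℝ) := by linarith
  have h3m1 : (1:ℝ) ≤ 3*(m:ℝ) := by linarith
  have hcast : ((3*m:ℕ):ℝ) = 3*(m:ℝ) := by push_cast; ring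
  have hs6 : ((Nat.sqrt (3*m) : ℕ) : ℝ) + 6 ≤ Real.sqrt (3*(m:ℝ)) + 6 := by
    have h := Real.nat_sqrt_le_real_sqrt (a := 3*m)
    rw [hcast] at h
    linarith
  have hd5 : ((3*m/5 : ℕ):ℝ) ≤ 3*(m:ℝ)/5 := by
    refine le_trans Nat.cast_div_le ?_
    rw [hcast]
    norm_num
  have hd2 : ((3*m/2 : ℕ):ℝ) ≤ 3*(m:ℝ)/2 := by
    refine le_trans Nat.cast_div_le ?_
    rw [hcast]
    norm_num
  rw [← @Nat.cast_lt ℝ]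
  push_cast
  rw [← Real.rpow_natCast (3*(m:ℝ)) (Nat.sqrt (3*m)+6), ← Real.rpow_natCast (4:ℝ) (3*m/5),
    ← Real.rpow_natCast (3:ℝ) (3*m/2), ← Real.rpow_natCast (2:ℝ) (2*m),
    ← Real.rpow_natCast (3:ℝ) (3*m), ← Real.rpow_natCast (2:ℝ) m]
  push_cast
  refine lt_of_le_of_lt ?_ (real_main hx)
  calc (3*(m:ℝ)+1) * ((3*(m:ℝ)) ^ ((Nat.sqrt (3*m) : ℝ) + 6) * (4:ℝ) ^ (((3*m/5 : ℕ)):ℝ)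
        * (3:ℝ) ^ (((3*m/2 : ℕ)):ℝ)) * (2:ℝ) ^ (2*(m:ℝ))
      = (3*(m:ℝ)+1) * (3*(m:ℝ)) ^ ((Nat.sqrt (3*m) : ℝ) + 6) * (4:ℝ) ^ (((3*m/5 : ℕ)):ℝ)
        * (3:ℝ) ^ (((3*m/2 : ℕ)):ℝ) * (2:ℝ) ^ (2*(m:ℝ)) := by ring
    _ ≤ (3*(m:ℝ)+1) * (3*(m:ℝ)) ^ (Real.sqrt (3*(m:ℝ)) + 6) * 4 ^ (3*(m:ℝ)/5)
        * 3 ^ (3*(m:ℝ)/2) * 2 ^ (2*(m:ℝ)) := by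
        gcongr
        all_goals first
          | exact h3m1
          | exact hs6
          | exact hd5
          | exact hd2
          | norm_num

lemma add_pow_nat (N : ℕ) : 3^N = ∑ k ∈ Finset.range (N+1), 2^k * (N.choose k) := by
  have h := add_pow (R := ℕ) 2 1 N
  simp only [one_pow, mul_one, Nat.cast_id] at h
  rw [show (3:ℕ) = 2+1 by norm_num, h]

/-- Lower bound: `3^(3m) ≤ (3m+1) * choose(3m, m) * 4^m`. -/
lemma lower_bound (m : ℕ) : 3^(3*m) ≤ (3*m+1) * ((3*m).choose m * 2^(2*m)) := by
  have step_up : ∀ k, k < 2*m → (3*m).choose k * 2^k ≤ (3*m).choose (k+1) * 2^(k+1) := by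
    intro k hk
    have hid : (3*m).choose (k+1) * (k+1) = (3*m).choose k * (3*m - k) :=
      Nat.choose_succ_right_eq (3*m) k
    have h3 : (3*m).choose k ≤ 2 * (3*m).choose (k+1) := by
      have hpos : 0 < 3*m - k := by omega
      refine Nat.le_of_mul_le_mul_right ?_ hpos
      calc (3*m).choose k * (3*m - k) = (3*m).choose (k+1) * (k+1) := hid.symm
        _ ≤ (3*m).choose (k+1) * (2*(3*m - k)) := Nat.mul_le_mul_left _ (by omega)
        _ = 2 * (3*m).choose (k+1) * (3*m - k) := by ring
    calc (3*m).choose k * 2^k ≤ 2 * (3*m).choose (k+1) * 2^k := Nat.mul_le_mul_right _ h3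
      _ = (3*m).choose (k+1) * 2^(k+1) := by ring
  have step_down : ∀ k, 2*m ≤ k → (3*m).choose (k+1) * 2^(k+1) ≤ (3*m).choose k * 2^k := by
    intro k hk
    have hid : (3*m).choose (k+1) * (k+1) = (3*m).choose k * (3*m - k) :=
      Nat.choose_succ_right_eq (3*m) k
    have h3 : 2 * (3*m).choose (k+1) ≤ (3*m).choose k := by
      have hpos : 0 < k + 1 := by omega
      refine Nat.le_of_mul_le_mul_right ?_ hpos
      calc 2 * (3*m).choose (k+1) * (k+1) = 2 * ((3*m).choose (k+1) * (k+1)) := by ring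
        _ = 2 * ((3*m).choose k * (3*m - k)) := by rw [hid]
        _ = (3*m).choose k * (2*(3*m - k)) := by ring
        _ ≤ (3*m).choose k * (k+1) := Nat.mul_le_mul_left _ (by omega)
    calc (3*m).choose (k+1) * 2^(k+1) = 2 * (3*m).choose (k+1) * 2^k := by ring
      _ ≤ (3*m).choose k * 2^k := Nat.mul_le_mul_right _ h3
  have up : ∀ d k, k + d = 2*m → (3*m).choose k * 2^k ≤ (3*m).choose (2*m) * 2^(2*m) := by
    intro d
    induction d with
    | zero => intro k hk; rw [show k = 2*m by omega]
    | succ d ih =>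
      intro k hk
      exact le_trans (step_up k (by omega)) (ih (k+1) (by omega))
  have down : ∀ d, (3*m).choose (2*m + d) * 2^(2*m + d) ≤ (3*m).choose (2*m) * 2^(2*m) := by
    intro d
    induction d with
    | zero => exact le_refl _
    | succ d ih =>
      refine le_trans ?_ ih
      exact step_down (2*m+d) (by omega)
  have key : ∀ k ∈ Finset.range (3*m+1),
      2^k * ((3*m).choose k) ≤ (3*m).choose (2*m) * 2^(2*m) := by
    intro k hk
    rw [mul_comm]
    rcases le_or_gt k (2*m) with h | h
    · exact up (2*m - k) k (by omega)
    · have h2 := down (k - 2*m)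
      rwa [show 2*m + (k - 2*m) = k by omega] at h2
  rw [add_pow_nat (3*m)]
  calc ∑ k ∈ Finset.range (3*m+1), 2^k * ((3*m).choose k)
      ≤ ∑ _k ∈ Finset.range (3*m+1), (3*m).choose (2*m) * 2^(2*m) := Finset.sum_le_sum key
    _ = (3*m+1) * ((3*m).choose (2*m) * 2^(2*m)) := by
        rw [Finset.sum_const, Finset.card_range, smul_eq_mul]
    _ = (3*m+1) * ((3*m).choose m * 2^(2*m)) := by
        rw [show (2:ℕ)*m = 3*m - m by omega, Nat.choose_symm (by omega)]

/-- Upper bound on the auxiliary binomial coefficient. -/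
lemma M_upper (m : ℕ) : (3*m/2).choose m * 2^m ≤ 3^(3*m/2) := by
  have hmem : m ∈ Finset.range (3*m/2 + 1) := by
    rw [Finset.mem_range]; omega
  rw [add_pow_nat (3*m/2)]
  rw [mul_comm]
  exact Finset.single_le_sum (f := fun k => 2^k * ((3*m/2).choose k))
    (fun i _ => Nat.zero_le _) hmem




lemma mod_eq_sub1 {x p : ℕ} (h1 : p ≤ x) (h2 : x < 2*p) : x % p = x - p := by
  rw [Nat.mod_eq_sub_mod h1, Nat.mod_eq_of_lt (by omega)]

lemma mod_eq_sub2 {x p : ℕ} (h1 : 2*p ≤ x) (h2 : x < 3*p) : x % p = x - 2*p := by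
  rw [Nat.mod_eq_sub_mod (by omega), Nat.mod_eq_sub_mod (by omega),
    Nat.mod_eq_of_lt (by omega)]
  omega

lemma mod_eq_sub3 {x p : ℕ} (h1 : 3*p ≤ x) (h2 : x < 4*p) : x % p = x - 3*p := by
  rw [Nat.mod_eq_sub_mod (by omega), Nat.mod_eq_sub_mod (by omega),
    Nat.mod_eq_sub_mod (by omega), Nat.mod_eq_of_lt (by omega)]
  omega

/-- Kummer-type formula for the exponent of a largish prime in `choose (3m) m`. -/
lemma factorization_K_eq_if {m p : ℕ} (hp : p.Prime) (hs : 3*m < p^2) (hm : 0 < m) :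
    ((3*m).choose m).factorization p = if p ≤ m % p + (2*m) % p then 1 else 0 := by
  haveI := Fact.mk hp
  rw [Nat.factorization_def _ hp]
  rw [padicValNat_choose (show m ≤ 3*m by omega)
    (show Nat.log p (3*m) < 2 from Nat.log_lt_of_lt_pow (by omega) hs)]
  have h1 : Finset.Ico 1 2 = {1} := rfl
  rw [h1, Finset.filter_singleton]
  rw [show 3*m - m = 2*m by omega]
  simp only [pow_one]
  split <;> simp

/-- Kummer-type formula for the exponent of a largish prime in `choose (3m/2) m`. -/
lemma factorization_M_eq_if {m p : ℕ} (hp : p.Prime) (hs : 3*m < p^2) (hm : 0 < m) :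
    ((3*m/2).choose m).factorization p = if p ≤ m % p + (3*m/2 - m) % p then 1 else 0 := by
  haveI := Fact.mk hp
  rw [Nat.factorization_def _ hp]
  rw [padicValNat_choose (show m ≤ 3*m/2 by omega)
    (show Nat.log p (3*m/2) < 2 from Nat.log_lt_of_lt_pow (by omega) (by omega))]
  have h1 : Finset.Ico 1 2 = {1} := rfl
  rw [h1, Finset.filter_singleton]
  simp only [pow_one]
  split <;> simp

/-- Classification of large primes with nonzero exponent in `choose (3m) m`:
either they are small (`5p ≤ 3m`), or they divide the auxiliary binomial, or they
are in the top window. -/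
lemma window {m p : ℕ} (hm : 1000 ≤ m) (hp : p.Prime)
    (hs : Nat.sqrt (3*m) < p) (h5 : ¬ 5*p ≤ 3*m) (hM : ¬ p ∣ (3*m/2).choose m)
    (hν : ((3*m).choose m).factorization p ≠ 0)
    (H : ∀ q : ℕ, q.Prime → 2*m < q → q ≤ 3*m → 3*m ≤ q + 5) :
    3*m - 5 ≤ p ∧ p ≤ 3*m := by
  have hp2 : 3*m < p^2 := by
    have := Nat.sqrt_lt'.mp hs
    nlinarith [this]
  have hple : p ≤ 3*m := by
    by_contra h
    exact hν (Nat.factorization_choose_eq_zero_of_lt (by omega))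
  have hcond : p ≤ m % p + (2*m) % p := by
    by_contra hc
    rw [factorization_K_eq_if hp hp2 (by omega)] at hν
    simp [hc] at hν
  have hMdvd : ∀ (h1 : p ≤ m % p + (3*m/2 - m) % p), p ∣ (3*m/2).choose m := by
    intro h1
    apply Nat.dvd_of_factorization_pos
    rw [factorization_M_eq_if hp hp2 (by omega)]
    simp [h1]
  rcases le_or_gt p (2*m) with hp2m | hp2m
  · exfalso
    rcases le_or_gt (3*p) (2*m) with h32 | h32
    · -- W1 : no exponent
      have e1 : m % p = m - p := mod_eq_sub1 (by omega) (by omega)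
      have e2 : (2*m) % p = 2*m - 3*p := mod_eq_sub3 (by omega) (by omega)
      omega
    rcases le_or_gt (4*p) (3*m) with h43 | h43
    · -- W2 : divides M
      apply hM
      apply hMdvd
      have e1 : m % p = m - p := mod_eq_sub1 (by omega) (by omega)
      have e3 : (3*m/2 - m) % p = 3*m/2 - m := Nat.mod_eq_of_lt (by omega)
      omega
    rcases le_or_gt p m with hpm | hpm
    · -- W3 : no exponent
      have e1 : m % p = m - p := mod_eq_sub1 (by omega) (by omega)
      have e2 : (2*m) % p = 2*m - 2*p := mod_eq_sub2 (by omega) (by omega)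
      omega
    rcases le_or_gt (2*p) (3*m) with h23 | h23
    · -- W4 : divides M
      apply hM
      apply hMdvd
      have e1 : m % p = m := Nat.mod_eq_of_lt (by omega)
      have e3 : (3*m/2 - m) % p = 3*m/2 - m := Nat.mod_eq_of_lt (by omega)
      omega
    · -- W5 : no exponent
      have e1 : m % p = m := Nat.mod_eq_of_lt (by omega)
      have e2 : (2*m) % p = 2*m - p := mod_eq_sub1 (by omega) (by omega)
      omega
  · -- top window
    exact ⟨by have := H p hp hp2m hple; omega, hple⟩



/-- The key factorization upper bound for `choose (3m) m` assuming no prime avoids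
the top window. -/
lemma K_le {m : ℕ} (hm : 1000 ≤ m)
    (H : ∀ q : ℕ, q.Prime → 2*m < q → q ≤ 3*m → 3*m ≤ q + 5) :
    (3*m).choose m ≤ (3*m)^(Nat.sqrt (3*m)+6) * 4^(3*m/5) * ((3*m/2).choose m) := by
  have h3m : 0 < 3*m := by omega
  have hMpos : 0 < (3*m/2).choose m := Nat.choose_pos (by omega)
  set f : ℕ → ℕ := fun p => p ^ ((3*m).choose m).factorization p with hf
  set S := (Finset.range (3*m+1)).filter Nat.Prime with hS
  have hfilter : ∏ p ∈ S, f p = ∏ p ∈ Finset.range (3*m+1), f p := by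
    refine Finset.prod_filter_of_ne fun p _ h => ?_
    contrapose! h
    simp only [hf]
    rw [Nat.factorization_eq_zero_of_not_prime _ h, pow_zero]
  have hrep : (3*m).choose m = ∏ p ∈ S, f p := by
    rw [hfilter]
    exact (Nat.prod_pow_factorization_choose (3*m) m (by omega)).symm
  rw [hrep, ← Finset.prod_filter_mul_prod_filter_not S (· ≤ Nat.sqrt (3*m))]
  have bound1 : ∏ p ∈ S.filter (· ≤ Nat.sqrt (3*m)), f p ≤ (3*m)^(Nat.sqrt (3*m)) := by
    refine (Finset.prod_le_prod' fun p _ => (?_ : f p ≤ 3*m)).trans ?_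
    · exact Nat.pow_factorization_choose_le h3m
    have hcard : (Finset.Icc 1 (Nat.sqrt (3*m))).card = Nat.sqrt (3*m) := by
      rw [Nat.card_Icc, Nat.add_sub_cancel]
    rw [Finset.prod_const]
    refine pow_le_pow_right₀ (by omega) ((Finset.card_le_card fun x hx => ?_).trans hcard.le)
    obtain ⟨h1, h2⟩ := Finset.mem_filter.1 hx
    exact Finset.mem_Icc.mpr ⟨(Finset.mem_filter.1 h1).2.one_lt.le, h2⟩
  have bound2 : ∏ p ∈ S.filter (¬ · ≤ Nat.sqrt (3*m)), f p
      ≤ 4^(3*m/5) * (((3*m/2).choose m) * (3*m)^6) := by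
    set T := S.filter (¬ · ≤ Nat.sqrt (3*m)) with hT
    have hone : ∀ p ∈ T, f p ≤ p := by
      intro p hpT
      obtain ⟨hpS, hpbig⟩ := Finset.mem_filter.1 hpT
      have hprime : p.Prime := (Finset.mem_filter.1 hpS).2
      have hle1 : ((3*m).choose m).factorization p ≤ 1 := by
        refine Nat.factorization_choose_le_one ?_
        have := Nat.sqrt_lt'.mp (by simpa using hpbig)
        nlinarith [this]
      calc f p ≤ p ^ 1 := Nat.pow_le_pow_right hprime.one_lt.le hle1
        _ = p := pow_one p
    rw [← Finset.prod_filter_mul_prod_filter_not T (fun p => 5*p ≤ 3*m)]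
    have bound20 : ∏ p ∈ T.filter (fun p => 5*p ≤ 3*m), f p ≤ 4^(3*m/5) := by
      refine le_trans ?_ (primorial_le_4_pow (3*m/5))
      refine (Finset.prod_le_prod' fun p hp => hone p (Finset.mem_filter.1 hp).1).trans ?_
      rw [primorial]
      refine Finset.prod_le_prod_of_subset_of_one_le' ?_ ?_
      · intro p hpmem
        obtain ⟨hpT, hp5⟩ := Finset.mem_filter.1 hpmem
        obtain ⟨hpS, _⟩ := Finset.mem_filter.1 hpT
        obtain ⟨_, hprime⟩ := Finset.mem_filter.1 hpS
        refine Finset.mem_filter.2 ⟨Finset.mem_range.2 ?_, hprime⟩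
        have : p ≤ 3*m/5 := by omega
        omega
      · intro p hp _
        exact (Finset.mem_filter.1 hp).2.one_lt.le
    have bound21 : ∏ p ∈ T.filter (fun p => ¬ 5*p ≤ 3*m), f p
        ≤ ((3*m/2).choose m) * (3*m)^6 := by
      set U := T.filter (fun p => ¬ 5*p ≤ 3*m) with hU
      rw [← Finset.prod_filter_mul_prod_filter_not U (fun p => p ∣ (3*m/2).choose m)]
      have boundA : ∏ p ∈ U.filter (fun p => p ∣ (3*m/2).choose m), f p
          ≤ (3*m/2).choose m := by
        refine (Finset.prod_le_prod' fun p hp => hone p ?_).trans ?_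
        · exact (Finset.mem_filter.1 (Finset.mem_filter.1 hp).1).1
        refine Nat.le_of_dvd hMpos ?_
        refine Finset.prod_primes_dvd _ ?_ ?_
        · intro p hp
          obtain ⟨hpU, _⟩ := Finset.mem_filter.1 hp
          obtain ⟨hpT, _⟩ := Finset.mem_filter.1 hpU
          obtain ⟨hpS, _⟩ := Finset.mem_filter.1 hpT
          exact (Finset.mem_filter.1 hpS).2.prime
        · intro p hp
          exact (Finset.mem_filter.1 hp).2
      have boundB : ∏ p ∈ U.filter (fun p => ¬ p ∣ (3*m/2).choose m), f p ≤ (3*m)^6 := by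
        set V := U.filter (fun p => ¬ p ∣ (3*m/2).choose m) with hV
        set W := V.filter (fun p => ((3*m).choose m).factorization p ≠ 0) with hW
        have hVW : ∏ p ∈ V, f p = ∏ p ∈ W, f p := by
          refine (Finset.prod_subset (Finset.filter_subset _ _) ?_).symm
          intro x hx hnx
          have : ((3*m).choose m).factorization x = 0 := by
            by_contra hne
            exact hnx (Finset.mem_filter.2 ⟨hx, hne⟩)
          simp [hf, this]
        rw [hVW]
        have hWsub : W ⊆ Finset.Icc (3*m-5) (3*m) := by
          intro p hpW
          obtain ⟨hpV, hν⟩ := Finset.mem_filter.1 hpW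
          obtain ⟨hpU, hnd⟩ := Finset.mem_filter.1 hpV
          obtain ⟨hpT, h5⟩ := Finset.mem_filter.1 hpU
          obtain ⟨hpS, hbig⟩ := Finset.mem_filter.1 hpT
          have hprime := (Finset.mem_filter.1 hpS).2
          have := window hm hprime (by simpa using hbig) h5 hnd hν H
          exact Finset.mem_Icc.2 ⟨this.1, this.2⟩
        calc ∏ p ∈ W, f p ≤ (3*m)^W.card :=
              Finset.prod_le_pow_card _ _ _ (fun p _ => Nat.pow_factorization_choose_le h3m)
          _ ≤ (3*m)^6 := by
              refine Nat.pow_le_pow_right (by omega) ?_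
              refine le_trans (Finset.card_le_card hWsub) ?_
              rw [Nat.card_Icc]
              omega
      exact Nat.mul_le_mul boundA boundB
    exact Nat.mul_le_mul bound20 bound21
  calc (∏ p ∈ S.filter (· ≤ Nat.sqrt (3*m)), f p) * ∏ p ∈ S.filter (¬ · ≤ Nat.sqrt (3*m)), f p
      ≤ (3*m)^(Nat.sqrt (3*m)) * (4^(3*m/5) * (((3*m/2).choose m) * (3*m)^6)) :=
        Nat.mul_le_mul bound1 bound2
    _ = (3*m)^(Nat.sqrt (3*m)+6) * 4^(3*m/5) * ((3*m/2).choose m) := by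
        rw [pow_add]
        ring



/-- The main theorem for large `n`. -/
lemma large_case (n : ℕ) (hn : 2100000 ≤ n) :
    ∃ p : ℕ, p.Prime ∧ 2 * n ≤ 3 * p ∧ p < n - 2 := by
  by_contra hno
  push_neg at hno
  set m := n/3 + 1 with hmdef
  have hm7 : 700000 ≤ m := by omega
  have H : ∀ q : ℕ, q.Prime → 2*m < q → q ≤ 3*m → 3*m ≤ q + 5 := by
    intro q hq h1 h2
    have h3 : 2*n ≤ 3*q := by omega
    have h4 := hno q hq h3
    omega
  have L1 := lower_bound m
  have L2 := K_le (m := m) (by omega) H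
  have L3 := M_upper m
  have L4 := main_inequality_nat hm7
  have C : 3^(3*m) * 2^m
      ≤ (3*m+1) * ((3*m)^(Nat.sqrt (3*m)+6) * 4^(3*m/5) * 3^(3*m/2)) * 2^(2*m) := by
    calc 3^(3*m) * 2^m ≤ ((3*m+1) * ((3*m).choose m * 2^(2*m))) * 2^m :=
          Nat.mul_le_mul_right _ L1
      _ ≤ ((3*m+1) * (((3*m)^(Nat.sqrt (3*m)+6) * 4^(3*m/5) * ((3*m/2).choose m)) * 2^(2*m))) * 2^m := by
          gcongr
      _ = (3*m+1) * ((3*m)^(Nat.sqrt (3*m)+6) * 4^(3*m/5) * (((3*m/2).choose m) * 2^m)) * 2^(2*m) := by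
          ring
      _ ≤ (3*m+1) * ((3*m)^(Nat.sqrt (3*m)+6) * 4^(3*m/5) * 3^(3*m/2)) * 2^(2*m) := by
          gcongr
  exact absurd C (not_le.mpr L4)

/-- Ladder step for small cases. -/
lemma ladder_step {n : ℕ} (p q : ℕ) (pp : p.Prime) (cov : 2*p + 4 ≤ 3*q)
    (H : 2*n ≤ 3*q → ∃ r : ℕ, r.Prime ∧ 2*n ≤ 3*r ∧ r < n - 2)
    (hn : 2*n ≤ 3*p) : ∃ r : ℕ, r.Prime ∧ 2*n ≤ 3*r ∧ r < n - 2 := by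
  by_cases h : p + 2 < n
  · exact ⟨p, pp, hn, by omega⟩
  · exact H (by omega)

end TwoThirds

/-- For every integer `n ≥ 14` there exists a prime `p` with `(2/3)n ≤ p < n - 2`. -/
theorem exists_prime_two_thirds (n : ℕ) (hn : 14 ≤ n) :
    ∃ p : ℕ, p.Prime ∧ 2 * n ≤ 3 * p ∧ p < n - 2 := by
  rcases le_or_gt 2100000 n with hbig | hsmall
  · exact TwoThirds.large_case n hbig
  · have hlt : n < 2100000 := hsmall
    refine TwoThirds.ladder_step 2004881 1336597 (by norm_num) (by norm_num) (fun h1 => ?_) (by omega)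
    refine TwoThirds.ladder_step 1336597 891067 (by norm_num) (by norm_num) (fun h2 => ?_) h1
    refine TwoThirds.ladder_step 891067 594047 (by norm_num) (by norm_num) (fun h3 => ?_) h2
    refine TwoThirds.ladder_step 594047 396043 (by norm_num) (by norm_num) (fun h4 => ?_) h3
    refine TwoThirds.ladder_step 396043 264031 (by norm_num) (by norm_num) (fun h5 => ?_) h4
    refine TwoThirds.ladder_step 264031 176023 (by norm_num) (by norm_num) (fun h6 => ?_) h5
    refine TwoThirds.ladder_step 176023 117353 (by norm_num) (by norm_num) (fun h7 => ?_) h6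
    refine TwoThirds.ladder_step 117353 78241 (by norm_num) (by norm_num) (fun h8 => ?_) h7
    refine TwoThirds.ladder_step 78241 52163 (by norm_num) (by norm_num) (fun h9 => ?_) h8
    refine TwoThirds.ladder_step 52163 34781 (by norm_num) (by norm_num) (fun h10 => ?_) h9
    refine TwoThirds.ladder_step 34781 23203 (by norm_num) (by norm_num) (fun h11 => ?_) h10
    refine TwoThirds.ladder_step 23203 15473 (by norm_num) (by norm_num) (fun h12 => ?_) h11
    refine TwoThirds.ladder_step 15473 10321 (by norm_num) (by norm_num) (fun h13 => ?_) h12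
    refine TwoThirds.ladder_step 10321 6883 (by norm_num) (by norm_num) (fun h14 => ?_) h13
    refine TwoThirds.ladder_step 6883 4597 (by norm_num) (by norm_num) (fun h15 => ?_) h14
    refine TwoThirds.ladder_step 4597 3067 (by norm_num) (by norm_num) (fun h16 => ?_) h15
    refine TwoThirds.ladder_step 3067 2053 (by norm_num) (by norm_num) (fun h17 => ?_) h16
    refine TwoThirds.ladder_step 2053 1373 (by norm_num) (by norm_num) (fun h18 => ?_) h17
    refine TwoThirds.ladder_step 1373 919 (by norm_num) (by norm_num) (fun h19 => ?_) h18
    refine TwoThirds.ladder_step 919 619 (by norm_num) (by norm_num) (fun h20 => ?_) h19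
    refine TwoThirds.ladder_step 619 421 (by norm_num) (by norm_num) (fun h21 => ?_) h20
    refine TwoThirds.ladder_step 421 283 (by norm_num) (by norm_num) (fun h22 => ?_) h21
    refine TwoThirds.ladder_step 283 193 (by norm_num) (by norm_num) (fun h23 => ?_) h22
    refine TwoThirds.ladder_step 193 131 (by norm_num) (by norm_num) (fun h24 => ?_) h23
    refine TwoThirds.ladder_step 131 89 (by norm_num) (by norm_num) (fun h25 => ?_) h24
    refine TwoThirds.ladder_step 89 61 (by norm_num) (by norm_num) (fun h26 => ?_) h25
    refine TwoThirds.ladder_step 61 43 (by norm_num) (by norm_num) (fun h27 => ?_) h26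
    refine TwoThirds.ladder_step 43 31 (by norm_num) (by norm_num) (fun h28 => ?_) h27
    refine TwoThirds.ladder_step 31 23 (by norm_num) (by norm_num) (fun h29 => ?_) h28
    refine TwoThirds.ladder_step 23 17 (by norm_num) (by norm_num) (fun h30 => ?_) h29
    refine TwoThirds.ladder_step 17 13 (by norm_num) (by norm_num) (fun h31 => ?_) h30
    refine TwoThirds.ladder_step 13 11 (by norm_num) (by norm_num) (fun h32 => ?_) h31
    exact ⟨11, by norm_num, h32, by omega⟩
end

section
/- Let v ≥ 2 be an integer, let n ≥ max{14, 2v-1}, and let p be a prime with 2v - 3 < p < n - 2 and p ≥ max{(2/3)n, 2v - 1}. Then 3p > 2(n - v) + 3, and p does not divide the integer c_p = ∏_{i=p+1}^n (1 + 2(i - v)). -/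
open Finset

/-- Let `v ≥ 2`, `n ≥ max{14, 2v-1}`, and `p` a prime with `2v - 3 < p < n - 2` and
`p ≥ max{(2/3)n, 2v - 1}`. Then `3p > 2(n - v) + 3` and `p` does not divide
`c_p = ∏_{i=p+1}^n (1 + 2(i - v))`. -/
theorem three_p_gt_and_not_dvd_cp (v : ℤ) (hv : 2 ≤ v) (n : ℤ) (hn14 : 14 ≤ n)
    (hn : 2 * v - 1 ≤ n) (p : ℕ) (hp : p.Prime)
    (h1 : 2 * v - 3 < (p : ℤ)) (h2 : (p : ℤ) < n - 2)
    (h3 : 2 * n ≤ 3 * (p : ℤ)) (h4 : 2 * v - 1 ≤ (p : ℤ)) :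
    3 * (p : ℤ) > 2 * (n - v) + 3 ∧
      ¬ ((p : ℤ) ∣ ∏ i ∈ Finset.Icc ((p : ℤ) + 1) n, (1 + 2 * (i - v))) := by
  have hpZ : Prime ((p : ℤ)) := Nat.prime_iff_prime_int.mp hp
  constructor
  · linarith
  · intro hdvd
    obtain ⟨i, hi, hd⟩ := hpZ.exists_mem_finset_dvd hdvd
    rw [Finset.mem_Icc] at hi
    have h5 : (p : ℤ) < 1 + 2 * (i - v) := by omega
    have h6 : 1 + 2 * (i - v) < 3 * (p : ℤ) := by omega
    have hppos : (0 : ℤ) < (p : ℤ) := by exact_mod_cast hp.pos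
    obtain ⟨k, hk⟩ := hd
    have hk1 : 1 < k := by nlinarith
    have hk3 : k < 3 := by nlinarith
    have : k = 2 := by omega
    subst this
    omega
end

section
/- Let v ≥ 2 be an integer, let n ≥ max{14, 2v-1}, and let p be a prime with 2v - 3 < p < n - 2 and p ≥ max{(2/3)n, 2v - 1}. Then the p-adic valuation of the integer c_0 = ∏_{i=1}^n (1 + 2(i - v)) equals exactly 1. -/
open Finset

/-- Let `v ≥ 2`, `n ≥ max{14, 2v-1}`, and `p` a prime with `2v - 3 < p < n - 2` and
`p ≥ max{(2/3)n, 2v - 1}`. Then the `p`-adic valuation of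
`c₀ = ∏_{i=1}^n (1 + 2(i - v))` is exactly `1`. -/
theorem padicValInt_c0_eq_one (v : ℤ) (hv : 2 ≤ v) (n : ℤ) (hn14 : 14 ≤ n)
    (hn : 2 * v - 1 ≤ n) (p : ℕ) (hp : p.Prime)
    (h1 : 2 * v - 3 < (p : ℤ)) (h2 : (p : ℤ) < n - 2)
    (h3 : 2 * n ≤ 3 * (p : ℤ)) (h4 : 2 * v - 1 ≤ (p : ℤ)) :
    padicValInt p (∏ i ∈ Finset.Icc (1 : ℤ) n, (1 + 2 * (i - v))) = 1 := by
  haveI : Fact p.Prime := ⟨hp⟩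
  have hp2 : p ≠ 2 := by omega
  have hpodd : Odd (p : ℤ) := by exact_mod_cast hp.odd_of_ne_two hp2
  obtain ⟨k, hk⟩ := hpodd
  set i₀ : ℤ := k + v with hi₀
  have hmem : i₀ ∈ Finset.Icc (1 : ℤ) n := by
    simp only [Finset.mem_Icc]; omega
  have hsplit := Finset.mul_prod_erase (Finset.Icc (1 : ℤ) n)
    (fun i => 1 + 2 * (i - v)) hmem
  have hterm : 1 + 2 * (i₀ - v) = (p : ℤ) := by omega
  have hQne : (∏ i ∈ (Finset.Icc (1 : ℤ) n).erase i₀, (1 + 2 * (i - v))) ≠ 0 := by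
    apply Finset.prod_ne_zero_iff.mpr
    intro i _
    omega
  have hQnd : ¬ ((p : ℤ) ∣ ∏ i ∈ (Finset.Icc (1 : ℤ) n).erase i₀, (1 + 2 * (i - v))) := by
    rw [Prime.dvd_finset_prod_iff (Nat.prime_iff_prime_int.mp hp)]
    rintro ⟨i, hi, c, hc⟩
    rw [Finset.mem_erase, Finset.mem_Icc] at hi
    obtain ⟨hne, hi1, hi2⟩ := hi
    have hpn : (0 : ℤ) < p := by omega
    have hc1 : -1 < c := by nlinarith
    have hc2 : c < 3 := by nlinarith
    interval_cases c <;> omega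
  rw [← hsplit]
  rw [hterm, padicValInt.mul (by exact_mod_cast hp.ne_zero) hQne,
    padicValInt.self hp.one_lt, padicValInt.eq_zero_of_not_dvd hQnd]
end

section
/- Let n ≥ 2 be an integer with n ≡ 2 (mod 4) or n ≡ 3 (mod 4), and let u be any integer. Then the rational number Δ_n^{(u)} = ∏_{j=2}^n j^j · ((2u + 1 + 2j)/2)^{j-1} is not the square of a rational number. -/
open Finset

/-- The discriminant `Δ_n^{(u)} = ∏_{j=2}^n j^j ((2u+1+2j)/2)^(j-1)` of the polynomial
`𝓛_n^{(u)}(x)`. -/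
def laguerreDisc (n : ℕ) (u : ℤ) : ℚ :=
  ∏ j ∈ Finset.Icc 2 n, (j : ℚ) ^ j * ((2 * (u : ℚ) + 1 + 2 * (j : ℚ)) / 2) ^ (j - 1)

/-! Since `2u + 1 + 2j` is odd, the `2`-adic valuation of `Δ_n^{(u)}` is
`∑ j v₂(j) - ∑ (j - 1)`. Each `j v₂(j)` is even, while `∑_{j=2}^n (j - 1) = n(n - 1)/2` is odd
exactly when `n ≡ 2, 3 (mod 4)`; so the valuation is odd and `Δ_n^{(u)}` is not a square. -/

lemma padicValRat_prod {p : ℕ} [Fact p.Prime] {ι : Type*} (s : Finset ι) {f : ι → ℚ}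
    (hf : ∀ i ∈ s, f i ≠ 0) :
    padicValRat p (∏ i ∈ s, f i) = ∑ i ∈ s, padicValRat p (f i) := by
  induction s using Finset.cons_induction with
  | empty => simp
  | cons a s ha ih =>
    rw [prod_cons, sum_cons, padicValRat.mul (hf a (mem_cons_self a s))
        (prod_ne_zero_iff.2 fun i hi => hf i (mem_cons_of_mem hi)),
      ih fun i hi => hf i (mem_cons_of_mem hi)]

lemma padicValRat_two_of_odd {m : ℤ} (hm : Odd m) : padicValRat 2 (m : ℚ) = 0 := by
  have h2 : ¬ ((2 : ℕ) : ℤ) ∣ m := by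
    rwa [Nat.cast_two, ← even_iff_two_dvd, Int.not_even_iff_odd]
  rw [padicValRat.of_int, padicValInt.eq_zero_of_not_dvd h2]
  rfl

lemma padicValRat_two_two : padicValRat 2 (2 : ℚ) = 1 := by
  exact_mod_cast padicValRat.self (p := 2) one_lt_two

section factor

variable (u : ℤ) (j : ℕ)

lemma odd_two_mul_add_one_add_two_mul : Odd (2 * u + 1 + 2 * j) := ⟨u + j, by ring⟩

lemma two_mul_add_one_add_two_mul_ne_zero : 2 * (u : ℚ) + 1 + 2 * (j : ℚ) ≠ 0 := by
  have hodd := odd_two_mul_add_one_add_two_mul u j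
  exact_mod_cast (fun h => by simp [h] at hodd : 2 * u + 1 + 2 * (j : ℤ) ≠ 0)

variable {j} in
lemma laguerreDisc_factor_ne_zero (hj : j ≠ 0) :
    (j : ℚ) ^ j * ((2 * (u : ℚ) + 1 + 2 * (j : ℚ)) / 2) ^ (j - 1) ≠ 0 :=
  mul_ne_zero (pow_ne_zero _ (Nat.cast_ne_zero.2 hj))
    (pow_ne_zero _ (div_ne_zero (two_mul_add_one_add_two_mul_ne_zero u j) two_ne_zero))

variable {j} in
lemma padicValRat_two_laguerreDisc_factor (hj : j ≠ 0) :
    padicValRat 2 ((j : ℚ) ^ j * ((2 * (u : ℚ) + 1 + 2 * (j : ℚ)) / 2) ^ (j - 1)) =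
      j * padicValNat 2 j - ((j : ℤ) - 1) := by
  have hc := two_mul_add_one_add_two_mul_ne_zero u j
  have hc_val : padicValRat 2 (2 * (u : ℚ) + 1 + 2 * (j : ℚ)) = 0 := by
    exact_mod_cast padicValRat_two_of_odd (odd_two_mul_add_one_add_two_mul u j)
  rw [padicValRat.mul (pow_ne_zero _ (Nat.cast_ne_zero.2 hj))
      (pow_ne_zero _ (div_ne_zero hc two_ne_zero)), padicValRat.pow, padicValRat.pow,
    padicValRat.div hc two_ne_zero, padicValRat.of_nat, hc_val,
    padicValRat_two_two, Nat.cast_pred (Nat.pos_of_ne_zero hj)]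
  ring

end factor

lemma padicValRat_two_laguerreDisc (n : ℕ) (u : ℤ) :
    padicValRat 2 (laguerreDisc n u) =
      ∑ j ∈ Icc 2 n, ((j : ℤ) * padicValNat 2 j - ((j : ℤ) - 1)) := by
  have hne : ∀ j ∈ Icc 2 n, j ≠ 0 := fun j hj => (zero_lt_two.trans_le (mem_Icc.1 hj).1).ne'
  rw [laguerreDisc, padicValRat_prod _ fun j hj => laguerreDisc_factor_ne_zero u (hne j hj)]
  exact sum_congr rfl fun j hj => padicValRat_two_laguerreDisc_factor u (hne j hj)

lemma even_mul_padicValNat_two (j : ℕ) : Even (j * padicValNat 2 j) := by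
  rcases Nat.even_or_odd j with hj | hj
  · exact hj.mul_right _
  · simp [padicValNat.eq_zero_of_not_dvd hj.not_two_dvd_nat]

lemma two_mul_sum_Icc_two_sub_one (n : ℕ) : 2 * ∑ j ∈ Icc 2 n, ((j : ℤ) - 1) = n * (n - 1) := by
  induction n with
  | zero => rfl
  | succ n ih =>
    rcases Nat.eq_zero_or_pos n with rfl | hn
    · rfl
    rw [sum_Icc_succ_top (by omega), mul_add, ih]
    push_cast
    ring

lemma odd_sum_Icc_two_sub_one {n : ℕ} (h : n % 4 = 2 ∨ n % 4 = 3) :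
    Odd (∑ j ∈ Icc 2 n, ((j : ℤ) - 1)) := by
  have hsum := two_mul_sum_Icc_two_sub_one n
  generalize ∑ j ∈ Icc 2 n, ((j : ℤ) - 1) = S at hsum ⊢
  obtain ⟨k, rfl | rfl⟩ : ∃ k, n = 4 * k + 2 ∨ n = 4 * k + 3 := ⟨n / 4, by omega⟩
  · exact ⟨4 * k ^ 2 + 3 * k, by push_cast at hsum; linarith⟩
  · exact ⟨4 * k ^ 2 + 5 * k + 1, by push_cast at hsum; linarith⟩

lemma odd_padicValRat_two_laguerreDisc {n : ℕ} (h : n % 4 = 2 ∨ n % 4 = 3) (u : ℤ) :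
    Odd (padicValRat 2 (laguerreDisc n u)) := by
  rw [padicValRat_two_laguerreDisc, sum_sub_distrib]
  refine Even.sub_odd (even_sum _ fun j _ => ?_) (odd_sum_Icc_two_sub_one h)
  exact_mod_cast even_mul_padicValNat_two j

theorem laguerreDisc_not_square_of_mod_four_general (n : ℕ)
    (h : n % 4 = 2 ∨ n % 4 = 3) (u : ℤ) :
    ¬ ∃ q : ℚ, laguerreDisc n u = q ^ 2 := by
  rintro ⟨q, hq⟩
  have hodd := odd_padicValRat_two_laguerreDisc h u
  rw [hq, padicValRat.pow, Nat.cast_two, ← Int.not_even_iff_odd] at hodd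
  exact hodd (even_two_mul _)

/-- For `n ≥ 2` with `n ≡ 2` or `3 (mod 4)` and any integer `u`, the discriminant
`Δ_n^{(u)}` is not the square of a rational. -/
theorem laguerreDisc_not_square_of_mod_four (n : ℕ) (hn : 2 ≤ n)
    (h : n % 4 = 2 ∨ n % 4 = 3) (u : ℤ) :
    ¬ ∃ q : ℚ, laguerreDisc n u = q ^ 2 :=
  laguerreDisc_not_square_of_mod_four_general n h u
end

section
/- Let n ≥ 14 be an integer and let p be a prime with (2/3)n ≤ p < n. Then the p-adic valuation of the product 1 · 3 · 5 ⋯ n_o of all odd positive integers at most n equals exactly 1, where n_o denotes the largest odd integer ≤ n. -/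
open Finset

/-- For `n ≥ 14` and a prime `p` with `(2/3)n ≤ p < n`, the `p`-adic valuation of the
product `1 · 3 · 5 ⋯ n_o` of all odd positive integers at most `n` is exactly `1`. -/
theorem padicValNat_oddProd_eq_one (n : ℕ) (hn : 14 ≤ n) (p : ℕ) (hp : p.Prime)
    (h1 : 2 * n ≤ 3 * p) (h2 : p < n) :
    padicValNat p (∏ i ∈ (Finset.Icc 1 n).filter (fun i => Odd i), i) = 1 := by
  classical
  set s := (Finset.Icc 1 n).filter (fun i => Odd i) with hs
  have hpos : ∀ i ∈ s, i ≠ 0 := by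
    intro i hi
    simp only [hs, Finset.mem_filter, Finset.mem_Icc] at hi
    omega
  have hprod_ne : (∏ i ∈ s, i) ≠ 0 := Finset.prod_ne_zero_iff.mpr hpos
  have hpodd : Odd p := hp.odd_of_ne_two (by omega)
  have hps : p ∈ s := by
    simp only [hs, Finset.mem_filter, Finset.mem_Icc]
    exact ⟨⟨hp.one_lt.le, h2.le⟩, hpodd⟩
  -- factorization of product
  have hfac : (∏ i ∈ s, i).factorization p = ∑ i ∈ s, i.factorization p := by
    rw [Nat.factorization_prod hpos]
    simp
  have hval : padicValNat p (∏ i ∈ s, i) = (∏ i ∈ s, i).factorization p := by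
    rw [Nat.factorization_def _ hp]
  rw [hval, hfac]
  rw [Finset.sum_eq_single p]
  · rw [Nat.Prime.factorization hp]
    simp
  · intro i hi hne
    simp only [hs, Finset.mem_filter, Finset.mem_Icc] at hi
    obtain ⟨⟨h1i, hin⟩, hoi⟩ := hi
    rw [Nat.factorization_eq_zero_iff]
    right; left
    intro hdvd
    obtain ⟨k, hk⟩ := hdvd
    have hk1 : k ≠ 1 := by rintro rfl; simp at hk; omega
    have hk0 : k ≠ 0 := by rintro rfl; omega
    have : 2 ≤ k := by omega
    have : 2 * p ≤ i := by
      calc 2 * p ≤ p * k := by nlinarith [hp.pos]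
      _ = i := hk.symm
    omega
  · intro h; exact absurd hps h
end
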